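/- For each i ∈ {1,...,m−1} let γ_i* := sup{‖S_i(θ)‖² : θ ∈ ℝ^d, ‖S₀(θ)‖² ≤ ‖S_i(θ)‖²} ∈ [0,∞], and let r be the q-th largest value among γ₁*, ..., γ_{m−1}*. Then the SPS confidence region satisfies Θ̂ₙ ⊆ {θ ∈ ℝ^d : (θ − θ̂ₙ)ᵀ Rₙ (θ − θ̂ₙ) ≤ r}. -/

import Mathlib

/-! Since every sign of `S₀` is `+1`, the normal equations give `S₀(θ) = (Rₙ^{1/2})ᵀ (θ̂ₙ − θ)`,
so `‖S₀(θ)‖²` is exactly `(θ − θ̂ₙ)ᵀ Rₙ (θ − θ̂ₙ)`. If `θ ∈ Θ̂ₙ`, at most `m − q − 1` indices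
`i ≥ 1` satisfy `‖S₀(θ)‖² ≻_π ‖S_i(θ)‖²`, so for at least `q` of them
`‖S₀(θ)‖² ≤ ‖S_i(θ)‖² ≤ γ_i*`, and a value dominated by `q` entries is at most the `q`-th
largest. -/

open Matrix

noncomputable section

/-- Squared Euclidean norm of a vector in `ℝ^d`. -/
def spsNormSq {d : ℕ} (v : Fin d → ℝ) : ℝ := ∑ j, v j ^ 2

/-- The strict total order `≻_π`. -/
def SuccPi {m : ℕ} (σ : Equiv.Perm (Fin m)) (z : Fin m → ℝ) (k j : Fin m) : Prop :=
  z j < z k ∨ (z k = z j ∧ σ j < σ k)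

/-- The (sign-perturbed) sums `S_i(θ)`. -/
def spsS {d n m : ℕ} (φ : Fin n → Fin d → ℝ) (Rhalf : Matrix (Fin d) (Fin d) ℝ)
    (Y : Fin n → ℝ) (a : Fin m → Fin n → ℝ) (i : Fin m) (θ : Fin d → ℝ) : Fin d → ℝ :=
  Rhalf⁻¹ *ᵥ ((n : ℝ)⁻¹ • ∑ t, (a i t * (Y t - φ t ⬝ᵥ θ)) • φ t)

/-- The rank `𝓡(θ)`. -/
def spsRank {d n m : ℕ} [NeZero m] (φ : Fin n → Fin d → ℝ)
    (Rhalf : Matrix (Fin d) (Fin d) ℝ) (Y : Fin n → ℝ) (a : Fin m → Fin n → ℝ)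
    (σ : Equiv.Perm (Fin m)) (θ : Fin d → ℝ) : ℕ :=
  1 + Set.ncard {i : Fin m | i ≠ 0 ∧
      SuccPi σ (fun j => spsNormSq (spsS φ Rhalf Y a j θ)) 0 i}

/-- The SPS confidence region `Θ̂ₙ`. -/
def spsRegion {d n m : ℕ} [NeZero m] (φ : Fin n → Fin d → ℝ)
    (Rhalf : Matrix (Fin d) (Fin d) ℝ) (Y : Fin n → ℝ) (a : Fin m → Fin n → ℝ)
    (σ : Equiv.Perm (Fin m)) (q : ℕ) : Set (Fin d → ℝ) :=
  {θ | spsRank φ Rhalf Y a σ θ ≤ m - q}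

/-- `γ_i* = sup {‖S_i(θ)‖² : ‖S₀(θ)‖² ≤ ‖S_i(θ)‖²}`, in the extended reals. -/
def gammaStar {d n m : ℕ} [NeZero m] (φ : Fin n → Fin d → ℝ)
    (Rhalf : Matrix (Fin d) (Fin d) ℝ) (Y : Fin n → ℝ) (a : Fin m → Fin n → ℝ)
    (i : Fin m) : EReal :=
  sSup ((fun θ : Fin d → ℝ => ((spsNormSq (spsS φ Rhalf Y a i θ) : ℝ) : EReal)) ''
    {θ : Fin d → ℝ | spsNormSq (spsS φ Rhalf Y a 0 θ) ≤ spsNormSq (spsS φ Rhalf Y a i θ)})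

/-- The `q`-th largest element of a multiset of extended reals. -/
def qthLargestE (s : Multiset EReal) (q : ℕ) : EReal :=
  (s.sort (· ≤ ·)).getD (Multiset.card s - q) 0

open Finset

theorem List.SortedLE.le_getD_length_sub {α : Type*} [LinearOrder α] {l : List α}
    (hl : l.SortedLE) {q : ℕ} (hq : 0 < q) {c : α} (d : α)
    (hc : q ≤ l.countP (c ≤ ·)) : c ≤ l.getD (l.length - q) d := by
  set k := l.length - q
  have hk : k < l.length := by have := l.countP_le_length (p := (c ≤ ·)); omega
  rw [List.getD_eq_getElem _ _ hk]
  by_contra! hlt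
  have htake : (l.take (k + 1)).countP (c ≤ ·) = 0 := by
    refine List.countP_eq_zero.2 fun x hx => ?_
    obtain ⟨i, hi, rfl⟩ := List.getElem_of_mem hx
    rw [List.getElem_take, decide_eq_true_eq, not_le]
    exact (hl.getElem_le_getElem_of_le (by simp at hi; omega)).trans_lt hlt
  have hdrop := (l.drop (k + 1)).countP_le_length (p := (c ≤ ·))
  rw [← List.take_append_drop (k + 1) l, List.countP_append, htake] at hc
  rw [List.length_drop] at hdrop
  omega

theorem le_qthLargestE {s : Multiset EReal} {q : ℕ} (hq : 0 < q) {c : EReal}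
    (hc : q ≤ s.countP (c ≤ ·)) : c ≤ qthLargestE s q := by
  rw [qthLargestE, ← Multiset.length_sort (· ≤ ·)]
  refine (Multiset.pairwise_sort s (· ≤ ·)).sortedLE.le_getD_length_sub hq 0 ?_
  rwa [← Multiset.coe_countP, Multiset.sort_eq]

theorem Matrix.sum_vecMulVec_self_mulVec {ι n R : Type*} [Fintype ι] [Fintype n] [CommSemiring R]
    (φ : ι → n → R) (v : n → R) :
    (∑ t, vecMulVec (φ t) (φ t)) *ᵥ v = ∑ t, (φ t ⬝ᵥ v) • φ t := by
  simp [sum_mulVec, vecMulVec_mulVec]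

theorem spsNormSq_eq_dotProduct {d : ℕ} (v : Fin d → ℝ) : spsNormSq v = v ⬝ᵥ v := by
  simp [spsNormSq, dotProduct, sq]

theorem spsNormSq_transpose_mulVec {d : ℕ} (R : Matrix (Fin d) (Fin d) ℝ) (w : Fin d → ℝ) :
    spsNormSq (Rᵀ *ᵥ w) = w ⬝ᵥ ((R * Rᵀ) *ᵥ w) := by
  rw [spsNormSq_eq_dotProduct, dotProduct_mulVec, vecMul_transpose, ← mulVec_mulVec,
    dotProduct_comm]

theorem spsS_eq_transpose_mulVec {d n m : ℕ} (φ : Fin n → Fin d → ℝ) (Y : Fin n → ℝ)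
    (Rhalf : Matrix (Fin d) (Fin d) ℝ) (hRhalf : IsUnit Rhalf.det)
    (hfact : Rhalf * Rhalfᵀ = (n : ℝ)⁻¹ • ∑ t, vecMulVec (φ t) (φ t))
    (θhat : Fin d → ℝ) (hθhat : θhat = (∑ t, vecMulVec (φ t) (φ t))⁻¹ *ᵥ ∑ t, Y t • φ t)
    (a : Fin m → Fin n → ℝ) (i : Fin m) (hai : ∀ t, a i t = 1) (θ : Fin d → ℝ) :
    spsS φ Rhalf Y a i θ = Rhalfᵀ *ᵥ (θhat - θ) := by
  set M := ∑ t, vecMulVec (φ t) (φ t)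
  have hM : IsUnit M.det := by
    have h : IsUnit ((n : ℝ)⁻¹ • M).det := by
      rw [← hfact, det_mul, det_transpose]
      exact hRhalf.mul hRhalf
    rw [det_smul, IsUnit.mul_iff] at h
    exact h.2
  have hsum : (n : ℝ)⁻¹ • ∑ t, (a i t * (Y t - φ t ⬝ᵥ θ)) • φ t =
      (Rhalf * Rhalfᵀ) *ᵥ (θhat - θ) :=
    calc _ = (n : ℝ)⁻¹ • (∑ t, Y t • φ t - M *ᵥ θ) := by
          simp [hai, sub_smul, M, Matrix.sum_vecMulVec_self_mulVec]
      _ = _ := by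
          rw [hfact, hθhat, smul_mulVec, mulVec_sub, mulVec_mulVec, mul_nonsing_inv _ hM,
            one_mulVec]
  rw [spsS, hsum, mulVec_mulVec, ← mul_assoc, nonsing_inv_mul _ hRhalf, one_mul]

theorem le_of_not_succPi {m : ℕ} {σ : Equiv.Perm (Fin m)} {z : Fin m → ℝ} {k j : Fin m}
    (h : ¬ SuccPi σ z k j) : z k ≤ z j :=
  not_lt.1 fun hlt => h (Or.inl hlt)

theorem le_card_filter_not_of_one_add_ncard_le {α : Type*} [Fintype α] [DecidableEq α]
    (i₀ : α) (P : α → Prop) [DecidablePred P] {q : ℕ}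
    (h : 1 + Set.ncard {i | i ≠ i₀ ∧ P i} ≤ Fintype.card α - q) :
    q ≤ #{i ∈ univ.filter (· ≠ i₀) | ¬ P i} := by
  have hP : Set.ncard {i | i ≠ i₀ ∧ P i} = #{i ∈ univ.filter (· ≠ i₀) | P i} := by
    rw [← Set.ncard_coe_finset]
    congr 1
    ext i
    simp
  have hcard : #(univ.filter (· ≠ i₀)) = Fintype.card α - 1 := by
    rw [filter_ne', card_erase_of_mem (mem_univ _), card_univ]
  have hsplit := card_filter_add_card_filter_not (s := univ.filter (· ≠ i₀)) (fun i => P i)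
  omega

theorem coe_spsNormSq_le_gammaStar {d n m : ℕ} [NeZero m] (φ : Fin n → Fin d → ℝ)
    (Rhalf : Matrix (Fin d) (Fin d) ℝ) (Y : Fin n → ℝ) (a : Fin m → Fin n → ℝ) {i : Fin m}
    {θ : Fin d → ℝ}
    (h : spsNormSq (spsS φ Rhalf Y a 0 θ) ≤ spsNormSq (spsS φ Rhalf Y a i θ)) :
    (spsNormSq (spsS φ Rhalf Y a 0 θ) : EReal) ≤ gammaStar φ Rhalf Y a i :=
  (EReal.coe_le_coe_iff.2 h).trans (le_sSup ⟨θ, h, rfl⟩)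

theorem sps_region_subset_ellipsoid_general
    (d n m q : ℕ) [NeZero m] (hq : 0 < q)
    (φ : Fin n → Fin d → ℝ) (Y : Fin n → ℝ)
    (Rn : Matrix (Fin d) (Fin d) ℝ)
    (hRn : Rn = (n : ℝ)⁻¹ • ∑ t, vecMulVec (φ t) (φ t))
    (Rhalf : Matrix (Fin d) (Fin d) ℝ)
    (hRhalfInv : IsUnit Rhalf.det)
    (hfact : Rhalf * Rhalfᵀ = Rn)
    (θhat : Fin d → ℝ)
    (hθhat : θhat = (∑ t, vecMulVec (φ t) (φ t))⁻¹ *ᵥ ∑ t, Y t • φ t)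
    (a : Fin m → Fin n → ℝ)
    (ha0 : ∀ t, a 0 t = 1)
    (π : Equiv.Perm (Fin m)) :
    spsRegion φ Rhalf Y a π q ⊆
      {θ : Fin d → ℝ | (((θ - θhat) ⬝ᵥ (Rn *ᵥ (θ - θhat)) : ℝ) : EReal) ≤
        qthLargestE ((Finset.univ.filter (fun i : Fin m => i ≠ 0)).val.map
          (fun i => gammaStar φ Rhalf Y a i)) q} := by
  classical
  intro θ hθ
  have hS0 : spsNormSq (spsS φ Rhalf Y a 0 θ) = (θ - θhat) ⬝ᵥ (Rn *ᵥ (θ - θhat)) := by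
    rw [spsS_eq_transpose_mulVec φ Y Rhalf hRhalfInv (hfact.trans hRn) θhat hθhat a 0 ha0,
      spsNormSq_transpose_mulVec, hfact, ← neg_sub θ, mulVec_neg, neg_dotProduct, dotProduct_neg,
      neg_neg]
  rw [Set.mem_ofPred_eq, ← hS0]
  refine le_qthLargestE hq ?_
  rw [Multiset.countP_map, ← filter_val, ← card_def]
  refine (le_card_filter_not_of_one_add_ncard_le (0 : Fin m)
    (SuccPi π (fun j => spsNormSq (spsS φ Rhalf Y a j θ)) 0) (by rwa [Fintype.card_fin])).trans
    (card_le_card fun i hi => ?_)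
  rw [mem_filter] at hi ⊢
  exact ⟨hi.1, coe_spsNormSq_le_gammaStar φ Rhalf Y a (le_of_not_succPi hi.2)⟩

/-- With `r` the `q`-th largest of `γ₁*, …, γ_{m−1}*`, the SPS region satisfies
`Θ̂ₙ ⊆ {θ : (θ−θ̂ₙ)ᵀ Rₙ (θ−θ̂ₙ) ≤ r}` (in the extended reals). -/
theorem sps_region_subset_ellipsoid
    (d n m q : ℕ) [NeZero m] (hn : 0 < n) (hq : 0 < q) (hqm : q < m)
    (φ : Fin n → Fin d → ℝ) (Y : Fin n → ℝ)
    (Rn : Matrix (Fin d) (Fin d) ℝ)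
    (hRn : Rn = (n : ℝ)⁻¹ • ∑ t, vecMulVec (φ t) (φ t))
    (hPD : Rn.PosDef)
    (Rhalf : Matrix (Fin d) (Fin d) ℝ)
    (hRhalfInv : IsUnit Rhalf.det)
    (hfact : Rhalf * Rhalfᵀ = Rn)
    (θhat : Fin d → ℝ)
    (hθhat : θhat = (∑ t, vecMulVec (φ t) (φ t))⁻¹ *ᵥ ∑ t, Y t • φ t)
    (a : Fin m → Fin n → ℝ)
    (ha0 : ∀ t, a 0 t = 1)
    (ha : ∀ i t, a i t = 1 ∨ a i t = -1)
    (π : Equiv.Perm (Fin m)) :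
    spsRegion φ Rhalf Y a π q ⊆
      {θ : Fin d → ℝ | (((θ - θhat) ⬝ᵥ (Rn *ᵥ (θ - θhat)) : ℝ) : EReal) ≤
        qthLargestE ((Finset.univ.filter (fun i : Fin m => i ≠ 0)).val.map
          (fun i => gammaStar φ Rhalf Y a i)) q} :=
  sps_region_subset_ellipsoid_general d n m q hq φ Y Rn hRn Rhalf hRhalfInv hfact θhat hθhat a ha0 π

end
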